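/- arXiv:1709.10227 — 3 statements merged into one kernel-verified Lean document; each statement's English description precedes it below -/
import Mathlib

section
/- (Eaves-type existence theorem) Assume D ∩ dom f is nonempty. Then problem (P) has a solution if and only if f0⁺(v) ≥ 0 for every v ∈ 0⁺D. -/
/-- The recession cone `0⁺C = {v | ∀ x ∈ C, ∀ t ≥ 0, x + t v ∈ C}`. -/
def recCone {X : Type*} [AddCommGroup X] [Module ℝ X] (C : Set X) : Set X :=
  {v | ∀ x ∈ C, ∀ t : ℝ, 0 ≤ t → x + t • v ∈ C}

/-!
The right-hand sides `b` for which a finite system of linear inequalities `a x ≤ b` is solvable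
form a polyhedral cone: this is Fourier–Motzkin elimination, one real variable at a time, after
factoring the system through the finite-dimensional range of its functionals. Consequently the
set of values `t` with `φ x ≤ t` for some feasible `x` is cut out by finitely many affine
inequalities in `t`, so it is either a closed half-line, and `φ` attains its minimum, or it is
unbounded below, and then the homogeneous system has a solution `d` with `φ d < 0`.

Minimizing `f` over `D` is the linear program of minimizing `t` over the polyhedron
`{(x, t) | x ∈ D ∩ dom f, ⟨vₖ, x⟩ + βₖ ≤ t}`. A descent direction `(d, s)` of it has
`d ∈ 0⁺D` and `(d, s) ∈ 0⁺(epi f)` with `s < 0`, so `f0⁺(d) < 0`. Conversely, at a minimizer `u`,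
`(u, f u) + (w, μ) ∈ epi f` and `u + w ∈ D` force `μ ≥ 0`.
-/

theorem exists_forall_le_forall_ge_of_finite {α : Type*} [ConditionallyCompleteLattice α]
    [Nonempty α] {L U : Set α} (hL : L.Finite) (hU : U.Finite)
    (h : ∀ x ∈ L, ∀ y ∈ U, x ≤ y) : ∃ s, (∀ x ∈ L, x ≤ s) ∧ ∀ y ∈ U, s ≤ y := by
  rcases L.eq_empty_or_nonempty with rfl | hLne
  · obtain ⟨s, hs⟩ := hU.bddBelow
    exact ⟨s, by simp, hs⟩
  · exact ⟨sSup L, fun x hx => le_csSup hL.bddAbove hx, fun y hy => csSup_le hLne (h · · y hy)⟩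

theorem exists_forall_mul_le_iff {ι : Type*} [Finite ι] (c b : ι → ℝ) :
    (∃ s, ∀ i, c i * s ≤ b i) ↔
      (∀ i, c i = 0 → 0 ≤ b i) ∧ ∀ i j, 0 < c i → c j < 0 → c j * b i ≤ c i * b j := by
  constructor
  · rintro ⟨s, hs⟩
    refine ⟨fun i hi => by simpa [hi] using hs i, fun i j hi hj => ?_⟩
    nlinarith [hs i, hs j]
  · rintro ⟨hzero, hpair⟩
    obtain ⟨s, hlow, hupp⟩ := exists_forall_le_forall_ge_of_finite
      ((Set.toFinite {j | c j < 0}).image fun j => b j / c j)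
      ((Set.toFinite {i | 0 < c i}).image fun i => b i / c i) (by
        rintro _ ⟨j, hj, rfl⟩ _ ⟨i, hi, rfl⟩
        rw [div_le_iff_of_neg hj, div_mul_eq_mul_div, div_le_iff₀ hi]
        linarith [hpair i j hi hj])
    refine ⟨s, fun i => ?_⟩
    rcases lt_trichotomy (c i) 0 with hi | hi | hi
    · rw [mul_comm, ← div_le_iff_of_neg hi]
      exact hlow _ ⟨i, hi, rfl⟩
    · simpa [hi] using hzero i hi
    · rw [mul_comm, ← le_div_iff₀ hi]
      exact hupp _ ⟨i, hi, rfl⟩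

theorem exists_isLeast_or_forall_nonpos {κ : Type*} (β c : κ → ℝ)
    (hne : ∃ t, ∀ k, 0 ≤ β k + t * c k) :
    (∃ t₀, IsLeast {t | ∀ k, 0 ≤ β k + t * c k} t₀) ∨ ∀ k, c k ≤ 0 := by
  set T := {t | ∀ k, 0 ≤ β k + t * c k}
  by_cases hbdd : BddBelow T
  · have hclosed : IsClosed T := by
      simp only [T, Set.ofPred_forall]
      exact isClosed_iInter fun k => isClosed_le continuous_const (by fun_prop)
    exact .inl ⟨sInf T, hclosed.isLeast_csInf hne hbdd⟩
  · refine .inr fun k => ?_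
    by_contra! hk
    refine hbdd ⟨-β k / c k, fun t ht => ?_⟩
    rw [div_le_iff₀ hk]
    linarith [ht k]

/-- Fourier–Motzkin property of `V`: for every finite system of linear inequalities `a x ≤ b`
on `V`, the right-hand sides `b` for which it is solvable form a polyhedral cone. -/
def Eliminable (V : Type*) [AddCommGroup V] [Module ℝ V] : Prop :=
  ∀ (ι : Type) [Finite ι] (a : ι → V →ₗ[ℝ] ℝ), ∃ S : Set ((ι → ℝ) →ₗ[ℝ] ℝ), S.Finite ∧
    ∀ b : ι → ℝ, (∃ x, ∀ i, a i x ≤ b i) ↔ ∀ l ∈ S, 0 ≤ l b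

section

variable {V W : Type*} [AddCommGroup V] [Module ℝ V] [AddCommGroup W] [Module ℝ W]

theorem eliminable_real : Eliminable ℝ := by
  intro ι _ a
  set c : ι → ℝ := fun i => a i 1
  refine ⟨(LinearMap.proj · ) '' {i | c i = 0} ∪
      (fun ij : ι × ι => c ij.1 • LinearMap.proj ij.2 - c ij.2 • LinearMap.proj ij.1) ''
        {ij | 0 < c ij.1 ∧ c ij.2 < 0},
    ((Set.toFinite _).image _).union ((Set.toFinite _).image _), fun b => ?_⟩
  have ha : ∀ i s, a i s = c i * s := fun i s => by
    rw [mul_comm, ← smul_eq_mul, ← map_smul, smul_eq_mul, mul_one]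
  simp only [ha, exists_forall_mul_le_iff, Set.mem_union, or_imp, forall_and,
    Set.forall_mem_image, Set.mem_ofPred_eq, Prod.forall, LinearMap.sub_apply, LinearMap.smul_apply,
    LinearMap.coe_proj, Function.eval, smul_eq_mul, sub_nonneg, and_imp]

theorem Eliminable.of_surjective (T : V →ₗ[ℝ] W) (hT : Function.Surjective T)
    (hV : Eliminable V) : Eliminable W := by
  intro ι _ a
  obtain ⟨S, hSfin, hS⟩ := hV ι fun i => (a i).comp T
  exact ⟨S, hSfin, fun b => by rw [← hS b, hT.exists]; rfl⟩

theorem Eliminable.prod (hV : Eliminable V) (hW : Eliminable W) : Eliminable (V × W) := by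
  intro ι _ a
  let aV : ι → V →ₗ[ℝ] ℝ := fun i => (a i).comp (LinearMap.inl ℝ V W)
  let aW : ι → W →ₗ[ℝ] ℝ := fun i => (a i).comp (LinearMap.inr ℝ V W)
  obtain ⟨S₁, hS₁fin, hS₁⟩ := hW ι aW
  have := hS₁fin.to_subtype
  let E : (ι → ℝ) →ₗ[ℝ] S₁ → ℝ := LinearMap.pi fun l => l.1
  obtain ⟨S₂, hS₂fin, hS₂⟩ := hV S₁ fun l => l.1.comp (LinearMap.pi aV)
  refine ⟨(·.comp E) '' S₂, hS₂fin.image _, fun b => ?_⟩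
  have hsplit : ∀ x w i, a i (x, w) = aV i x + aW i w := fun x w i => by
    simp [aV, aW, ← map_add]
  have hresidual : ∀ x, (∃ w, ∀ i, aW i w ≤ b i - aV i x) ↔
      ∀ l : S₁, l.1.comp (LinearMap.pi aV) x ≤ E b l := fun x => by
    refine (hS₁ (b - fun i => aV i x)).trans ?_
    simp only [map_sub, sub_nonneg, Subtype.forall]
    rfl
  calc (∃ x : V × W, ∀ i, a i x ≤ b i) ↔ ∃ x, ∃ w, ∀ i, aW i w ≤ b i - aV i x := by
        simp only [Prod.exists, hsplit, le_sub_iff_add_le']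
    _ ↔ ∀ l ∈ S₂, 0 ≤ l (E b) := (exists_congr hresidual).trans (hS₂ _)
    _ ↔ ∀ l ∈ (·.comp E) '' S₂, 0 ≤ l b := by simp

theorem eliminable_fin_fun : ∀ n : ℕ, Eliminable (Fin n → ℝ)
  | 0 => eliminable_real.of_surjective 0 (Function.surjective_to_subsingleton _)
  | n + 1 => (eliminable_real.prod (eliminable_fin_fun n)).of_surjective
      (Fin.consLinearEquiv ℝ fun _ => ℝ).toLinearMap (Fin.consLinearEquiv ℝ _).surjective

variable (V) in
theorem eliminable : Eliminable V := by
  intro ι _ a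
  let T := LinearMap.pi a
  have hrange : Eliminable (LinearMap.range T) := (eliminable_fin_fun _).of_surjective _
    (Module.finBasis ℝ (LinearMap.range T)).equivFun.symm.surjective
  obtain ⟨S, hSfin, hS⟩ := hrange ι fun i => (LinearMap.proj i).comp (LinearMap.range T).subtype
  exact ⟨S, hSfin, fun b => by rw [← hS b, T.surjective_rangeRestrict.exists]; rfl⟩

theorem exists_minimizer_or_exists_descent {ι : Type} [Finite ι] (a : ι → V →ₗ[ℝ] ℝ)
    (b : ι → ℝ) (φ : V →ₗ[ℝ] ℝ) (hne : ∃ x, ∀ i, a i x ≤ b i) :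
    (∃ u, (∀ i, a i u ≤ b i) ∧ ∀ x, (∀ i, a i x ≤ b i) → φ u ≤ φ x) ∨
      ∃ d, (∀ i, a i d ≤ 0) ∧ φ d < 0 := by
  obtain ⟨S, -, hS⟩ := eliminable V (Option ι) fun o => o.elim φ a
  let r : ℝ → (ι → ℝ) → Option ι → ℝ := fun t b o => o.elim t b
  have hvalue : ∀ t b', (∃ x, (∀ i, a i x ≤ b' i) ∧ φ x ≤ t) ↔
      ∀ l : S, 0 ≤ l.1 (r 0 b') + t * l.1 (r 1 0) := by
    intro t b'
    have hr : r t b' = r 0 b' + t • r 1 0 := by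
      funext o
      cases o <;> simp [r]
    simpa [Option.forall, hr, and_comm, r] using hS (r t b')
  obtain ⟨x₀, hx₀⟩ := hne
  rcases exists_isLeast_or_forall_nonpos (fun l : S => l.1 (r 0 b)) (fun l => l.1 (r 1 0))
      ⟨_, (hvalue _ _).1 ⟨x₀, hx₀, le_rfl⟩⟩ with ⟨t₀, ht₀, hleast⟩ | hnonpos
  · obtain ⟨u, hu, hut⟩ := (hvalue t₀ b).2 ht₀
    exact .inl ⟨u, hu, fun x hx => hut.trans (hleast ((hvalue _ _).1 ⟨x, hx, le_rfl⟩))⟩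
  · have hr0 : r 0 0 = 0 := by
      funext o
      cases o <;> rfl
    obtain ⟨d, hd, hdφ⟩ := (hvalue (-1) 0).2 fun l => by simp [hr0, hnonpos l]
    exact .inr ⟨d, hd, by linarith⟩

def polyhedralSet {ι : Type*} (A : V →ₗ[ℝ] W) (y : W) (a : ι → V →ₗ[ℝ] ℝ) (b : ι → ℝ) : Set V :=
  {x | A x = y ∧ ∀ i, a i x ≤ b i}

theorem mem_recCone_polyhedralSet {ι : Type*} {A : V →ₗ[ℝ] W} {y : W} {a : ι → V →ₗ[ℝ] ℝ}
    {b : ι → ℝ} {d : V} (hA : A d = 0) (ha : ∀ i, a i d ≤ 0) :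
    d ∈ recCone (polyhedralSet A y a b) := by
  rintro x ⟨hAx, hax⟩ t ht
  refine ⟨by simp [hAx, hA], fun i => ?_⟩
  simp only [map_add, map_smul, smul_eq_mul]
  nlinarith [hax i, ha i]

theorem polyhedralSet_inter_polyhedralSet {U ι ι' : Type*} [AddCommGroup U] [Module ℝ U]
    (A : V →ₗ[ℝ] W) (y : W) (a : ι → V →ₗ[ℝ] ℝ) (b : ι → ℝ)
    (B : V →ₗ[ℝ] U) (z : U) (a' : ι' → V →ₗ[ℝ] ℝ) (b' : ι' → ℝ) :
    polyhedralSet A y a b ∩ polyhedralSet B z a' b' =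
      polyhedralSet (A.prod B) (y, z) (Sum.elim a a') (Sum.elim b b') := by
  ext x
  simp only [polyhedralSet, Set.mem_inter_iff, Set.mem_ofPred_eq, LinearMap.prod_apply,
    Function.prod_apply, Prod.mk.injEq, Sum.forall, Sum.elim_inl, Sum.elim_inr]
  tauto

theorem exists_minimizer_or_exists_descent_polyhedralSet {ι : Type} [Finite ι] (A : V →ₗ[ℝ] W)
    (y : W) (a : ι → V →ₗ[ℝ] ℝ) (b : ι → ℝ) (φ : V →ₗ[ℝ] ℝ)
    (hne : (polyhedralSet A y a b).Nonempty) :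
    (∃ u ∈ polyhedralSet A y a b, ∀ x ∈ polyhedralSet A y a b, φ u ≤ φ x) ∨
      ∃ d, A d = 0 ∧ (∀ i, a i d ≤ 0) ∧ φ d < 0 := by
  obtain ⟨x₀, hAx₀, hx₀⟩ := hne
  let K := LinearMap.ker A
  have hmem : ∀ d : K, x₀ + d ∈ polyhedralSet A y a b ↔ ∀ i, a i d ≤ b i - a i x₀ := fun d => by
    simp only [polyhedralSet, Set.mem_ofPred_eq, map_add, hAx₀, LinearMap.mem_ker.1 d.2,
      add_zero, true_and, le_sub_iff_add_le']
  have hsub : ∀ x ∈ polyhedralSet A y a b, x - x₀ ∈ K := fun x hx => by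
    simp [K, hx.1, hAx₀]
  rcases exists_minimizer_or_exists_descent (fun i => (a i).comp K.subtype)
      (fun i => b i - a i x₀) (φ.comp K.subtype) ⟨0, by simpa using hx₀⟩
    with ⟨u, hu, hmin⟩ | ⟨d, hd, hφd⟩
  · refine .inl ⟨x₀ + u, (hmem u).2 hu, fun x hx => ?_⟩
    have := hmin ⟨x - x₀, hsub x hx⟩ ((hmem ⟨x - x₀, hsub x hx⟩).1 (by simpa using hx))
    simp only [LinearMap.comp_apply, Submodule.subtype_apply, map_sub] at this
    rw [map_add]
    linarith
  · exact .inr ⟨d, d.2, hd, hφd⟩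

theorem sup'_add_smul_le {κ : Type*} [Fintype κ] [Nonempty κ] (v : κ → V →ₗ[ℝ] ℝ) (β : κ → ℝ)
    {d : V} {s : ℝ} (hvs : ∀ k, v k d ≤ s) (x : V) {t : ℝ} (ht : 0 ≤ t) :
    Finset.univ.sup' Finset.univ_nonempty (fun k => v k (x + t • d) + β k) ≤
      Finset.univ.sup' Finset.univ_nonempty (fun k => v k x + β k) + t * s := by
  refine Finset.sup'_le _ _ fun k _ => ?_
  have := Finset.le_sup' (fun k => v k x + β k) (Finset.mem_univ k)
  simp only [map_add, map_smul, smul_eq_mul] at this ⊢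
  nlinarith [hvs k]

theorem exists_minimizer_sup'_or_exists_descent {ι κ : Type} [Finite ι] [Fintype κ] [Nonempty κ]
    (A : V →ₗ[ℝ] W) (y : W) (ℓ : ι → V →ₗ[ℝ] ℝ) (c : ι → ℝ) (v : κ → V →ₗ[ℝ] ℝ) (β : κ → ℝ)
    (hne : (polyhedralSet A y ℓ c).Nonempty) :
    (∃ u ∈ polyhedralSet A y ℓ c, ∀ x ∈ polyhedralSet A y ℓ c,
        Finset.univ.sup' Finset.univ_nonempty (fun k => v k u + β k) ≤
          Finset.univ.sup' Finset.univ_nonempty (fun k => v k x + β k)) ∨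
      ∃ d, A d = 0 ∧ (∀ i, ℓ i d ≤ 0) ∧ ∃ s < 0, ∀ k, v k d ≤ s := by
  set g : V → ℝ := fun x => Finset.univ.sup' Finset.univ_nonempty fun k => v k x + β k
  let a : ι ⊕ κ → V × ℝ →ₗ[ℝ] ℝ :=
    Sum.elim (fun i => (ℓ i).comp (LinearMap.fst ℝ V ℝ))
      fun k => (v k).comp (LinearMap.fst ℝ V ℝ) - LinearMap.snd ℝ V ℝ
  let b : ι ⊕ κ → ℝ := Sum.elim c fun k => -β k
  have hmem : ∀ x t, (x, t) ∈ polyhedralSet (A.comp (LinearMap.fst ℝ V ℝ)) y a b ↔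
      x ∈ polyhedralSet A y ℓ c ∧ g x ≤ t := fun x t => by
    have hk : ∀ k, v k x - t ≤ -β k ↔ v k x + β k ≤ t := fun k => by
      constructor <;> intro <;> linarith
    simp only [polyhedralSet, Set.mem_ofPred_eq, Sum.forall, a, b, g, Finset.sup'_le_iff,
      Finset.mem_univ, true_implies, and_assoc, Sum.elim_inl, Sum.elim_inr, LinearMap.comp_apply,
      LinearMap.sub_apply, LinearMap.fst_apply, LinearMap.snd_apply, hk]
  obtain ⟨x₀, hx₀⟩ := hne
  rcases exists_minimizer_or_exists_descent_polyhedralSet _ y a b (LinearMap.snd ℝ V ℝ)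
      ⟨(x₀, g x₀), (hmem _ _).2 ⟨hx₀, le_rfl⟩⟩ with ⟨⟨u, t⟩, hut, hmin⟩ | ⟨⟨d, s⟩, hd, hda, hs⟩
  · obtain ⟨hu, hgu⟩ := (hmem u t).1 hut
    exact .inl ⟨u, hu, fun x hx => hgu.trans (hmin (x, g x) ((hmem _ _).2 ⟨hx, le_rfl⟩))⟩
  · simp only [Sum.forall, a, Sum.elim_inl, Sum.elim_inr, LinearMap.comp_apply,
      LinearMap.sub_apply, LinearMap.fst_apply, LinearMap.snd_apply, sub_nonpos] at hd hda hs
    exact .inr ⟨d, hd, hda.1, s, hs, hda.2⟩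

theorem nonneg_of_minimizer_of_mem_recCone_epigraph {f : V → EReal} {D : Set V} {u w : V} {μ : ℝ}
    (hu : u ∈ D) (hmin : ∀ x ∈ D, f u ≤ f x) (htop : f u ≠ ⊤) (hbot : f u ≠ ⊥)
    (hw : w ∈ recCone D) (hμ : (w, μ) ∈ recCone {p : V × ℝ | f p.1 ≤ p.2}) : 0 ≤ μ := by
  set r := (f u).toReal
  have hr : f u = r := (EReal.coe_toReal htop hbot).symm
  have hstep : f (u + w) ≤ ((r + μ : ℝ) : EReal) := by
    simpa using hμ (u, r) hr.le 1 zero_le_one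
  have hle : f u ≤ f (u + w) := hmin _ (by simpa using hw u hu 1 zero_le_one)
  have : (r : EReal) ≤ ((r + μ : ℝ) : EReal) := hr ▸ hle.trans hstep
  linarith [EReal.coe_le_coe_iff.1 this]

theorem mem_recCone_epigraph {f : V → EReal} {dom : Set V} {g : V → ℝ}
    (hf : ∀ x ∈ dom, f x = g x) (hf' : ∀ x ∉ dom, f x = ⊤) {d : V} {s : ℝ}
    (hd : d ∈ recCone dom) (hg : ∀ x, ∀ t : ℝ, 0 ≤ t → g (x + t • d) ≤ g x + t * s) :
    (d, s) ∈ recCone {p : V × ℝ | f p.1 ≤ p.2} := by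
  rintro ⟨x, ρ⟩ hxρ t ht
  have hx : x ∈ dom := by
    by_contra h
    simp [Set.mem_ofPred_eq, hf' x h] at hxρ
  simp only [Set.mem_ofPred_eq, hf x hx, EReal.coe_le_coe_iff] at hxρ
  simp only [Set.mem_ofPred_eq, Prod.fst_add, Prod.snd_add, Prod.smul_fst, Prod.smul_snd,
    smul_eq_mul, hf _ (hd x hx t ht), EReal.coe_le_coe_iff]
  linarith [hg x t ht]

end

theorem forall_le_of_forall_mem_inter_le {V : Type*} {f : V → EReal} {dom D : Set V} {g : V → ℝ}
    (hf : ∀ x ∈ dom, f x = g x) (hf' : ∀ x ∉ dom, f x = ⊤) {u : V} (hu : u ∈ dom)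
    (hmin : ∀ x ∈ D ∩ dom, g u ≤ g x) : ∀ x ∈ D, f u ≤ f x := by
  intro x hx
  by_cases hxdom : x ∈ dom
  · rw [hf u hu, hf x hxdom]
    exact_mod_cast hmin x ⟨hx, hxdom⟩
  · simp [hf' x hxdom]

theorem eaves_type_existence_general
    {X Y Z : Type*}
    [AddCommGroup X] [Module ℝ X] [TopologicalSpace X]
    [AddCommGroup Y] [Module ℝ Y] [TopologicalSpace Y]
    [AddCommGroup Z] [Module ℝ Z] [TopologicalSpace Z]
    (A : X →L[ℝ] Y) (y : Y) (p : ℕ) (xs : Fin p → X →L[ℝ] ℝ) (α : Fin p → ℝ)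
    (B : X →L[ℝ] Z) (z : Z) (q : ℕ) (us : Fin q → X →L[ℝ] ℝ) (γs : Fin q → ℝ)
    (m : ℕ) (v : Fin (m + 1) → X →L[ℝ] ℝ) (β : Fin (m + 1) → ℝ)
    (D : Set X) (hD : D = {x | A x = y ∧ ∀ i, xs i x ≤ α i})
    (domf : Set X) (hdomf : domf = {x | B x = z ∧ ∀ j, us j x ≤ γs j})
    (f : X → EReal)
    (hf : ∀ x ∈ domf,
      f x = ((Finset.univ.sup' Finset.univ_nonempty fun k => v k x + β k : ℝ) : EReal))
    (hf' : ∀ x ∉ domf, f x = ⊤)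
    (frec : X → EReal)
    (hfrec : ∀ w : X, frec w =
      sInf ((fun μ : ℝ => (μ : EReal)) ''
        {μ : ℝ | (w, μ) ∈ recCone {pt : X × ℝ | f pt.1 ≤ (pt.2 : EReal)}}))
    (hne : (D ∩ domf).Nonempty) :
    (∃ u ∈ D, f u ≠ ⊤ ∧ f u ≠ ⊥ ∧ ∀ x ∈ D, f u ≤ f x) ↔
      ∀ w ∈ recCone D, (0 : EReal) ≤ frec w := by
  constructor
  · rintro ⟨u, huD, htop, hbot, hmin⟩ w hw
    rw [hfrec]
    refine le_sInf ?_
    rintro _ ⟨μ, hμ, rfl⟩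
    exact EReal.coe_nonneg.2 (nonneg_of_minimizer_of_mem_recCone_epigraph huD hmin htop hbot hw hμ)
  · intro hrec
    have hP : D ∩ domf = polyhedralSet ((A : X →ₗ[ℝ] Y).prod B) (y, z)
        (Sum.elim (fun i => xs i) fun j => us j) (Sum.elim α γs) := by
      rw [hD, hdomf]
      exact polyhedralSet_inter_polyhedralSet _ _ _ _ _ _ _ _
    rcases exists_minimizer_sup'_or_exists_descent _ _ _ _ (fun k => (v k : X →ₗ[ℝ] ℝ)) β
        (hP ▸ hne) with ⟨u, hu, hmin⟩ | ⟨d, hd, hdℓ, s, hs, hvs⟩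
    · rw [← hP] at hu hmin
      exact ⟨u, hu.1, by simp [hf u hu.2], by simp [hf u hu.2],
        forall_le_of_forall_mem_inter_le hf hf' hu.2 hmin⟩
    · obtain ⟨hAd, hBd⟩ := Prod.mk_eq_zero.1 hd
      rw [Sum.forall] at hdℓ
      have hdD : d ∈ recCone D := hD ▸ mem_recCone_polyhedralSet (b := α) hAd hdℓ.1
      have hdepi := mem_recCone_epigraph hf hf'
        (hdomf ▸ mem_recCone_polyhedralSet (b := γs) hBd hdℓ.2)
        fun x t ht => sup'_add_smul_le (fun k => (v k : X →ₗ[ℝ] ℝ)) β hvs x ht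
      have hfrecd : frec d ≤ s := by
        rw [hfrec]
        exact sInf_le ⟨s, hdepi, rfl⟩
      exact absurd (EReal.coe_le_coe_iff.1 ((hrec d hdD).trans hfrecd)) (not_le.2 hs)

/-- **Eaves-type existence theorem.**  With `D` a nonempty generalized polyhedral convex
set given by `A, y, xs, α`, and `f` a proper generalized polyhedral convex function with
`dom f` given by `B, z, us, γs` and `f = max {⟨vₖ, ·⟩ + βₖ}` on `dom f`, `+∞` elsewhere:
if `D ∩ dom f ≠ ∅`, then `(P)` has a solution iff the recession function
`f0⁺(w) = inf {μ | (w, μ) ∈ 0⁺(epi f)}` is nonnegative on `0⁺D`. -/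
theorem eaves_type_existence
    {X Y Z : Type*}
    [AddCommGroup X] [Module ℝ X] [TopologicalSpace X] [IsTopologicalAddGroup X]
    [ContinuousSMul ℝ X] [LocallyConvexSpace ℝ X] [T2Space X]
    [AddCommGroup Y] [Module ℝ Y] [TopologicalSpace Y] [IsTopologicalAddGroup Y]
    [ContinuousSMul ℝ Y] [LocallyConvexSpace ℝ Y] [T2Space Y]
    [AddCommGroup Z] [Module ℝ Z] [TopologicalSpace Z] [IsTopologicalAddGroup Z]
    [ContinuousSMul ℝ Z] [LocallyConvexSpace ℝ Z] [T2Space Z]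
    (A : X →L[ℝ] Y) (y : Y) (p : ℕ) (xs : Fin p → X →L[ℝ] ℝ) (α : Fin p → ℝ)
    (B : X →L[ℝ] Z) (z : Z) (q : ℕ) (us : Fin q → X →L[ℝ] ℝ) (γs : Fin q → ℝ)
    (m : ℕ) (v : Fin (m + 1) → X →L[ℝ] ℝ) (β : Fin (m + 1) → ℝ)
    (D : Set X) (hD : D = {x | A x = y ∧ ∀ i, xs i x ≤ α i})
    (domf : Set X) (hdomf : domf = {x | B x = z ∧ ∀ j, us j x ≤ γs j})
    (hdomne : domf.Nonempty)
    (f : X → EReal)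
    (hf : ∀ x ∈ domf,
      f x = ((Finset.univ.sup' Finset.univ_nonempty fun k => v k x + β k : ℝ) : EReal))
    (hf' : ∀ x ∉ domf, f x = ⊤)
    (frec : X → EReal)
    (hfrec : ∀ w : X, frec w =
      sInf ((fun μ : ℝ => (μ : EReal)) ''
        {μ : ℝ | (w, μ) ∈ recCone {pt : X × ℝ | f pt.1 ≤ (pt.2 : EReal)}}))
    (hne : (D ∩ domf).Nonempty) :
    (∃ u ∈ D, f u ≠ ⊤ ∧ f u ≠ ⊥ ∧ ∀ x ∈ D, f u ≤ f x) ↔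
      ∀ w ∈ recCone D, (0 : EReal) ≤ frec w :=
  eaves_type_existence_general A y p xs α B z q us γs m v β D hD domf hdomf f hf hf' frec hfrec hne
end

section
/- Suppose D = X and f is finite everywhere on X with f(x) = max{⟨v_k*, x⟩ + β_k : k = 1,…,m} for all x ∈ X. Then there exists x̄ ∈ X with f(x̄) ≤ f(x) for all x ∈ X if and only if 0 ∈ conv{v_k* : k = 1,…,m}. -/
/-!
If `∑ₖ wₖ • vₖ = 0` for weights `w` in the standard simplex, averaging the affine pieces with
these weights gives `f ≥ ∑ₖ wₖ βₖ`. Conversely, if `0` is not a convex combination of the `vₖ`,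
Gordan's alternative (Hahn–Banach in `ℝ^ι` applied to the range of `x ↦ (vₖ x)ₖ`) yields a
direction `u` with `vₖ u < 0` for all `k`, along which `f` decreases without bound.

It remains to see that a bounded-below maximum of finitely many affine functions attains its
infimum. Choose `u` in the recession cone `{u | ∀ k, vₖ u ≤ 0}` at which every `vₖ` that is
negative somewhere on the cone is negative. Far out along `u` only the pieces with `vₖ u = 0`
matter, and on these the recession cone is trivial, so their maximum is coercive on the
finite-dimensional range of `x ↦ (vₖ x)ₖ` and attains its minimum there.
-/

open Set Finset Filter

theorem mem_convexHull_range_iff_exists_stdSimplex {E ι : Type*} [AddCommGroup E] [Module ℝ E]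
    [Fintype ι] (v : ι → E) (x : E) :
    x ∈ convexHull ℝ (range v) ↔ ∃ w ∈ stdSimplex ℝ ι, ∑ i, w i • v i = x := by
  classical
  have : range v = Fintype.linearCombination ℝ v '' range fun i => Pi.single i 1 := by
    rw [← range_comp]; congr; funext i; simp
  rw [this, ← LinearMap.image_convexHull, convexHull_rangle_single_eq_stdSimplex]
  simp [Fintype.linearCombination_apply]

section Orthant

variable {ι : Type*} [Fintype ι]

theorem LinearMap.exists_stdSimplex_apply_eq_mul_sum_of_neg (ℓ : (ι → ℝ) →ₗ[ℝ] ℝ)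
    (hℓ : ∀ y, (∀ k, y k < 0) → ℓ y < 0) :
    ∃ w ∈ stdSimplex ℝ ι, ∃ c > 0, ∀ y, ℓ y = c * ∑ k, w k * y k := by
  classical
  have hℓ_apply : ∀ y, ℓ y = ∑ k, ℓ (Pi.single k 1) * y k := fun y => by
    conv_lhs => rw [← univ_sum_single y]
    refine (map_sum ℓ _ _).trans (sum_congr rfl fun k _ => ?_)
    rw [mul_comm, ← smul_eq_mul, ← map_smul, ← Pi.single_smul', smul_eq_mul, mul_one]
  have hpos : 0 < ℓ 1 := by simpa using hℓ (-1) fun _ => neg_one_lt_zero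
  have hsum : ∑ k, ℓ (Pi.single k 1) = ℓ 1 := by simpa using (hℓ_apply 1).symm
  have hnonneg : ∀ k, 0 ≤ ℓ (Pi.single k 1) := by
    intro k
    by_contra! hk
    -- otherwise `ℓ` vanishes at the point `-1 - t • eₖ` of the open negative orthant
    set t := ℓ 1 / -ℓ (Pi.single k 1)
    have hy : ∀ j, (-1 - t • Pi.single k 1 : ι → ℝ) j < 0 := by
      intro j
      have : 0 ≤ t * (Pi.single k 1 : ι → ℝ) j := by
        apply mul_nonneg (div_nonneg hpos.le (by linarith))
        rw [Pi.single_apply]; split_ifs <;> norm_num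
      simp only [Pi.sub_apply, Pi.neg_apply, Pi.smul_apply, smul_eq_mul, Pi.one_apply]
      linarith
    have := hℓ _ hy
    rw [map_sub, map_neg, map_smul, smul_eq_mul, div_mul_eq_mul_div, div_neg, mul_div_assoc,
      div_self hk.ne, mul_one] at this
    linarith
  refine ⟨fun k => ℓ (Pi.single k 1) / ℓ 1, ⟨fun k => div_nonneg (hnonneg k) hpos.le, ?_⟩,
    ℓ 1, hpos, fun y => ?_⟩
  · rw [← sum_div, hsum, div_self hpos.ne']
  · rw [hℓ_apply, mul_sum]
    refine sum_congr rfl fun k _ => ?_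
    field_simp

/-- Gordan's alternative. -/
theorem Submodule.exists_forall_neg_or_exists_stdSimplex (V : Submodule ℝ (ι → ℝ)) :
    (∃ y ∈ V, ∀ k, y k < 0) ∨ ∃ w ∈ stdSimplex ℝ ι, ∀ y ∈ V, ∑ k, w k * y k = 0 := by
  refine or_iff_not_imp_left.2 fun h => ?_
  have hdisj : Disjoint (univ.pi fun _ => Iio 0) (V : Set (ι → ℝ)) :=
    Set.disjoint_left.2 fun y hyO hyV => h ⟨y, hyV, fun k => hyO k (Set.mem_univ k)⟩
  obtain ⟨ℓ, c, hℓO, hcV⟩ := geometric_hahn_banach_open (convex_pi fun _ _ => convex_Iio 0)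
    (isOpen_set_pi Set.finite_univ fun _ _ => isOpen_Iio) V.convex hdisj
  have hℓV : ∀ y ∈ V, ℓ y = 0 := fun y hy => by
    by_contra hne
    have := hcV (((c - 1) / ℓ y) • y) (V.smul_mem _ hy)
    rw [map_smul, smul_eq_mul, div_mul_cancel₀ _ hne] at this
    linarith
  have hc : c ≤ 0 := by simpa using hcV 0 V.zero_mem
  obtain ⟨w, hw, a, ha, hℓ⟩ := LinearMap.exists_stdSimplex_apply_eq_mul_sum_of_neg
    (ℓ : (ι → ℝ) →ₗ[ℝ] ℝ) fun y hy => (hℓO y fun k _ => hy k).trans_le hc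
  exact ⟨w, hw, fun y hy => (mul_eq_zero.1 (hℓ y ▸ hℓV y hy)).resolve_left ha.ne'⟩

variable [Nonempty ι]

theorem Submodule.exists_pos_mul_norm_le_sup' (V : Submodule ℝ (ι → ℝ))
    (hV : ∀ y ∈ V, y ≤ 0 → y = 0) : ∃ δ > 0, ∀ y ∈ V, δ * ‖y‖ ≤ univ.sup' univ_nonempty y := by
  let h : V → ℝ := fun y => univ.sup' univ_nonempty (y : ι → ℝ)
  have hcont : Continuous h := Continuous.finset_sup'_apply univ_nonempty fun k _ =>
    (continuous_apply k).comp continuous_subtype_val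
  have hpos : ∀ y ∈ Metric.sphere (0 : V) 1, 0 < h y := by
    intro y hy
    by_contra! hy0
    have : (y : ι → ℝ) = 0 := hV y y.2 fun k => (sup'_le_iff _ _).1 hy0 k (mem_univ k)
    simp [this] at hy
  obtain ⟨δ, hδ, hδh⟩ := (isCompact_sphere (0 : V) 1).exists_forall_le' hcont.continuousOn hpos
  refine ⟨δ, hδ, fun y hy => ?_⟩
  rcases eq_or_ne y 0 with rfl | hy0
  · simp
  have hny : 0 < ‖y‖ := norm_pos_iff.2 hy0
  obtain ⟨k, -, hk⟩ := (le_sup'_iff _).1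
    (hδh (‖y‖⁻¹ • ⟨y, hy⟩) (by simp [norm_smul, hny.ne']))
  calc δ * ‖y‖ ≤ y k := by
        simp only [SetLike.val_smul, Pi.smul_apply, smul_eq_mul] at hk
        rwa [← le_div_iff₀ hny, div_eq_inv_mul]
    _ ≤ univ.sup' univ_nonempty y := le_sup' y (mem_univ k)

theorem Submodule.exists_forall_sup'_add_le (V : Submodule ℝ (ι → ℝ))
    (hV : ∀ y ∈ V, y ≤ 0 → y = 0) (β : ι → ℝ) :
    ∃ y₀ ∈ V, ∀ y ∈ V, univ.sup' univ_nonempty (y₀ + β) ≤ univ.sup' univ_nonempty (y + β) := by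
  obtain ⟨δ, hδ, hδV⟩ := V.exists_pos_mul_norm_le_sup' hV
  let g : V → ℝ := fun y => univ.sup' univ_nonempty ((y : ι → ℝ) + β)
  have hcont : Continuous g := Continuous.finset_sup'_apply univ_nonempty fun k _ =>
    ((continuous_apply k).comp continuous_subtype_val).add continuous_const
  have hcoercive : Tendsto g (cocompact V) atTop := by
    refine tendsto_atTop_mono (fun y => ?_) (tendsto_atTop_add_const_right _
      (univ.inf' univ_nonempty β) (tendsto_norm_cocompact_atTop.const_mul_atTop hδ))
    obtain ⟨k, -, hk⟩ := exists_mem_eq_sup' univ_nonempty (y : ι → ℝ)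
    calc δ * ‖y‖ + univ.inf' univ_nonempty β ≤ (y : ι → ℝ) k + β k :=
          add_le_add (hk ▸ hδV y y.2) (inf'_le _ (mem_univ k))
      _ ≤ g y := le_sup' ((y : ι → ℝ) + β) (mem_univ k)
  obtain ⟨y₀, hy₀⟩ := hcont.exists_forall_le hcoercive
  exact ⟨y₀, y₀.2, fun y hy => hy₀ ⟨y, hy⟩⟩

end Orthant

section MaxAffine

variable {X ι : Type*} [AddCommGroup X] [Module ℝ X] [Fintype ι]

theorem exists_forall_neg_or_exists_stdSimplex_sum_smul_eq_zero (φ : ι → X →ₗ[ℝ] ℝ) :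
    (∃ u, ∀ k, φ k u < 0) ∨ ∃ w ∈ stdSimplex ℝ ι, ∑ k, w k • φ k = 0 := by
  rcases (LinearMap.range (LinearMap.pi φ)).exists_forall_neg_or_exists_stdSimplex with
    ⟨_, ⟨u, rfl⟩, hu⟩ | ⟨w, hw, hV⟩
  · exact .inl ⟨u, hu⟩
  · exact .inr ⟨w, hw, LinearMap.ext fun x => by simpa using hV _ ⟨x, rfl⟩⟩

theorem exists_forall_nonpos_neg_of_exists_neg (φ : ι → X →ₗ[ℝ] ℝ) :
    ∃ u, (∀ k, φ k u ≤ 0) ∧ ∀ w, (∀ j, φ j w ≤ 0) → ∀ k, φ k w < 0 → φ k u < 0 := by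
  classical
  have : ∀ k, ∃ w, (∀ j, φ j w ≤ 0) ∧ ((∃ w', (∀ j, φ j w' ≤ 0) ∧ φ k w' < 0) → φ k w < 0) := by
    intro k
    by_cases hk : ∃ w', (∀ j, φ j w' ≤ 0) ∧ φ k w' < 0
    · obtain ⟨w', hw'⟩ := hk
      exact ⟨w', hw'.1, fun _ => hw'.2⟩
    · exact ⟨0, by simp, fun h => absurd h hk⟩
  choose w hw hwk using this
  refine ⟨∑ i, w i, fun j => ?_, fun w' hw' k hk => ?_⟩
  · rw [map_sum]
    exact sum_nonpos fun i _ => hw i j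
  · rw [map_sum, ← add_sum_erase _ _ (mem_univ k)]
    exact add_neg_of_neg_of_nonpos (hwk k ⟨w', hw', hk⟩) (sum_nonpos fun i _ => hw i k)

variable [Nonempty ι]

noncomputable def maxAffine (φ : ι → X →ₗ[ℝ] ℝ) (β : ι → ℝ) (x : X) : ℝ :=
  univ.sup' univ_nonempty fun k => φ k x + β k

variable {φ : ι → X →ₗ[ℝ] ℝ} {β : ι → ℝ}

theorem le_maxAffine (φ : ι → X →ₗ[ℝ] ℝ) (β : ι → ℝ) (x : X) (k : ι) :
    φ k x + β k ≤ maxAffine φ β x :=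
  le_sup' (fun k => φ k x + β k) (mem_univ k)

theorem maxAffine_le_iff {x : X} {c : ℝ} : maxAffine φ β x ≤ c ↔ ∀ k, φ k x + β k ≤ c := by
  simp [maxAffine]

theorem eventually_maxAffine_add_smul_le {u : X} (hu : ∀ k, φ k u ≤ 0) (x : X) {c : ℝ}
    (hc : ∀ k, φ k u = 0 → φ k x + β k ≤ c) :
    ∀ᶠ t : ℝ in atTop, maxAffine φ β (x + t • u) ≤ c := by
  simp only [maxAffine_le_iff, eventually_all, map_add, map_smul, smul_eq_mul]
  intro k
  rcases (hu k).lt_or_eq with hneg | hzero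
  · have : Tendsto (fun t => φ k x + t * φ k u + β k) atTop atBot :=
      tendsto_atBot_add_const_right _ _ (tendsto_atBot_add_const_left _ _
        (tendsto_id.atTop_mul_const_of_neg hneg))
    exact this.eventually_le_atBot c
  · simp only [hzero, mul_zero, add_zero]
    exact .of_forall fun _ => hc k hzero

theorem not_bddBelow_maxAffine {u : X} (hu : ∀ k, φ k u < 0) :
    ¬ BddBelow (range (maxAffine φ β)) := by
  rintro ⟨B, hB⟩
  obtain ⟨t, ht⟩ := (eventually_maxAffine_add_smul_le (β := β) (fun k => (hu k).le) 0
    (c := B - 1) fun k hk => absurd hk (hu k).ne).exists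
  linarith [hB (mem_range_self (0 + t • u))]

theorem sum_mul_le_maxAffine {w : ι → ℝ} (hw : w ∈ stdSimplex ℝ ι) (hφ : ∑ k, w k • φ k = 0)
    (x : X) : ∑ k, w k * β k ≤ maxAffine φ β x :=
  calc ∑ k, w k * β k = ∑ k, w k * (φ k x + β k) := by
        have : ∑ k, w k * φ k x = 0 := by simpa using LinearMap.congr_fun hφ x
        simp only [mul_add, sum_add_distrib, this, zero_add]
    _ ≤ ∑ k, w k * maxAffine φ β x :=
        sum_le_sum fun k _ => mul_le_mul_of_nonneg_left (le_maxAffine φ β x k) (hw.1 k)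
    _ = maxAffine φ β x := by rw [← sum_mul, hw.2, one_mul]

theorem exists_forall_maxAffine_le_of_forall_nonpos_eq_zero
    (hφ : ∀ u, (∀ k, φ k u ≤ 0) → ∀ k, φ k u = 0) :
    ∃ x₀, ∀ x, maxAffine φ β x₀ ≤ maxAffine φ β x := by
  obtain ⟨_, ⟨x₀, rfl⟩, hx₀⟩ := (LinearMap.range (LinearMap.pi φ)).exists_forall_sup'_add_le
    (by rintro _ ⟨u, rfl⟩ hu; exact funext (hφ u hu)) β
  exact ⟨x₀, fun x => hx₀ _ ⟨x, rfl⟩⟩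

theorem exists_forall_maxAffine_le_of_bddBelow (hb : BddBelow (range (maxAffine φ β))) :
    ∃ x₀, ∀ x, maxAffine φ β x₀ ≤ maxAffine φ β x := by
  obtain ⟨u, hu, hu_max⟩ := exists_forall_nonpos_neg_of_exists_neg φ
  let J := {k // φ k u = 0}
  have : Nonempty J := by
    by_contra! hJ
    exact not_bddBelow_maxAffine (fun k => (hu k).lt_of_ne fun hk => hJ.false ⟨k, hk⟩) hb
  let ψ : J → X →ₗ[ℝ] ℝ := fun k => φ k
  -- A recession direction `w` of the pieces in `J`, pushed far along `u`, becomes one of all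
  -- pieces; by the choice of `u` it cannot decrease a piece in `J`.
  have hψ : ∀ w, (∀ k, ψ k w ≤ 0) → ∀ k, ψ k w = 0 := by
    intro w hw k
    obtain ⟨t, ht⟩ := (eventually_maxAffine_add_smul_le (β := 0) hu w (c := 0)
      fun j hj => by simpa using hw ⟨j, hj⟩).exists
    refine (hw k).antisymm (not_lt.1 fun hk => (hu_max (w + t • u) (fun j => ?_) k ?_).ne k.2)
    · simpa using maxAffine_le_iff.1 ht j
    · simpa [k.2] using hk
  obtain ⟨x₀, hx₀⟩ := exists_forall_maxAffine_le_of_forall_nonpos_eq_zero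
    (β := fun k : J => β k) hψ
  obtain ⟨t, ht⟩ := (eventually_maxAffine_add_smul_le hu x₀
    fun k hk => le_maxAffine ψ (fun k => β k) x₀ ⟨k, hk⟩).exists
  exact ⟨x₀ + t • u, fun x => ht.trans <| (hx₀ x).trans <|
    maxAffine_le_iff.2 fun k => le_maxAffine φ β x k⟩

theorem exists_forall_maxAffine_le_iff :
    (∃ x₀, ∀ x, maxAffine φ β x₀ ≤ maxAffine φ β x) ↔
      ∃ w ∈ stdSimplex ℝ ι, ∑ k, w k • φ k = 0 := by
  constructor
  · rintro ⟨x₀, hx₀⟩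
    refine (exists_forall_neg_or_exists_stdSimplex_sum_smul_eq_zero φ).resolve_left ?_
    rintro ⟨u, hu⟩
    exact not_bddBelow_maxAffine hu ⟨_, forall_mem_range.2 hx₀⟩
  · rintro ⟨w, hw, hφ⟩
    exact exists_forall_maxAffine_le_of_bddBelow
      ⟨_, forall_mem_range.2 (sum_mul_le_maxAffine hw hφ)⟩

end MaxAffine

theorem existence_unconstrained_general
    {X : Type*}
    [AddCommGroup X] [Module ℝ X] [TopologicalSpace X]
    (m : ℕ) (v : Fin (m + 1) → X →L[ℝ] ℝ) (β : Fin (m + 1) → ℝ)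
    (f : X → ℝ)
    (hf : ∀ x : X, f x = Finset.univ.sup' Finset.univ_nonempty fun k => v k x + β k) :
    (∃ xbar : X, ∀ x : X, f xbar ≤ f x) ↔
      (0 : X →L[ℝ] ℝ) ∈ convexHull ℝ (Set.range v) := by
  rw [show f = maxAffine (fun k => (v k : X →ₗ[ℝ] ℝ)) β from funext hf,
    exists_forall_maxAffine_le_iff, mem_convexHull_range_iff_exists_stdSimplex]
  refine exists_congr fun w => and_congr_right fun _ => ?_
  rw [← ContinuousLinearMap.coe_inj]
  simp [eq_comm]

/-- If `f : X → ℝ` is everywhere-finite polyhedral convex, `f x = max {⟨vₖ, x⟩ + βₖ}` for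
all `x ∈ X`, then `f` attains a global minimum over `X` iff `0 ∈ conv {vₖ : k}`. -/
theorem existence_unconstrained
    {X : Type*}
    [AddCommGroup X] [Module ℝ X] [TopologicalSpace X] [IsTopologicalAddGroup X]
    [ContinuousSMul ℝ X] [LocallyConvexSpace ℝ X] [T2Space X]
    (m : ℕ) (v : Fin (m + 1) → X →L[ℝ] ℝ) (β : Fin (m + 1) → ℝ)
    (f : X → ℝ)
    (hf : ∀ x : X, f x = Finset.univ.sup' Finset.univ_nonempty fun k => v k x + β k) :
    (∃ xbar : X, ∀ x : X, f xbar ≤ f x) ↔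
      (0 : X →L[ℝ] ℝ) ∈ convexHull ℝ (Set.range v) :=
  existence_unconstrained_general m v β f hf
end

section
/- (Optimality condition II) Assume that either f is a proper polyhedral convex function, or D is a nonempty polyhedral convex set. Then x ∈ D ∩ dom f is a solution of problem (P) if and only if 0 ∈ ∂f(x) + N_D(x). -/
open scoped Pointwise

/-- A generalized polyhedral convex set: the intersection of a closed affine subspace
with finitely many closed half-spaces. -/
def IsGPCS {X : Type*} [AddCommGroup X] [Module ℝ X] [TopologicalSpace X] (S : Set X) : Prop :=
  ∃ (p : ℕ) (xs : Fin p → X →L[ℝ] ℝ) (α : Fin p → ℝ) (L : AffineSubspace ℝ X),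
    IsClosed (L : Set X) ∧ S = {x | x ∈ L ∧ ∀ i, xs i x ≤ α i}

/-- A polyhedral convex set: a finite intersection of closed half-spaces (possibly all of `X`). -/
def IsPCS {X : Type*} [AddCommGroup X] [Module ℝ X] [TopologicalSpace X] (S : Set X) : Prop :=
  ∃ (p : ℕ) (xs : Fin p → X →L[ℝ] ℝ) (α : Fin p → ℝ),
    S = {x | ∀ i, xs i x ≤ α i}

/-!
The converse implication is the subgradient inequality at points of `D`. For the direct one, the
generalized polyhedral set among `D`, `dom f` lies in `x + V` for the direction `V` of its affine
subspace, and minimizing `f = max_k (v_k + β_k)` over `D` becomes a linear program in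
`(d, t) ∈ V × ℝ` with finitely many inequality constraints. Farkas' lemma, which holds in any real
vector space by induction on the number of inequalities, gives KKT multipliers: convex weights `λ`
and `μ, ν ≥ 0` with complementary slackness and `∑ λ_k v_k + ∑ μ_i a_i + ∑ ν_j b_j = 0` on `V`,
where `a_i ≤ α_i` and `b_j ≤ β'_j` are the inequalities of `D` and `dom f`. So
`φ = ∑ λ_k v_k + ∑ ν_j b_j` is a subgradient of `f` and `ψ = ∑ μ_i a_i` a normal to `D` at `x`.
They cancel only on `V`; but whichever of `D`, `dom f` lies in `x + V` only sees its functional on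
`V`, so it can be replaced by minus the other one.
-/

open Function

lemma Finset.sum_insert_update_mul {ι : Type*} [DecidableEq ι] {s : Finset ι} {j : ι} (hj : j ∉ s)
    (μ w : ι → ℝ) (t : ℝ) :
    ∑ i ∈ insert j s, update μ j t i * w i = t * w j + ∑ i ∈ s, μ i * w i := by
  rw [Finset.sum_insert hj, update_self]
  congr 1
  exact Finset.sum_congr rfl fun i hi => by rw [update_of_ne (ne_of_mem_of_not_mem hi hj)]

lemma Finset.sum_mul_le_of_sum_eq_one {κ : Type*} {s : Finset κ} {lam w : κ → ℝ} {r : ℝ}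
    (hlam : ∀ k ∈ s, 0 ≤ lam k) (hsum : ∑ k ∈ s, lam k = 1) (hw : ∀ k ∈ s, w k ≤ r) :
    ∑ k ∈ s, lam k * w k ≤ r :=
  calc ∑ k ∈ s, lam k * w k ≤ ∑ k ∈ s, lam k * r :=
        Finset.sum_le_sum fun k hk => mul_le_mul_of_nonneg_left (hw k hk) (hlam k hk)
    _ = r := by rw [← Finset.sum_mul, hsum, one_mul]

lemma Finset.sum_mul_le_sum_mul_of_complementary_slackness {ι : Type*} {s : Finset ι}
    {μ w w₀ α : ι → ℝ} (hμ : ∀ i ∈ s, 0 ≤ μ i) (hslack : ∀ i ∈ s, μ i * w₀ i = μ i * α i)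
    (hw : ∀ i ∈ s, w i ≤ α i) : ∑ i ∈ s, μ i * w i ≤ ∑ i ∈ s, μ i * w₀ i :=
  Finset.sum_le_sum fun i hi => (hslack i hi).symm ▸ mul_le_mul_of_nonneg_left (hw i hi) (hμ i hi)

section Farkas

variable {W ι : Type*} [AddCommGroup W] [Module ℝ W]

theorem exists_nonneg_eq_sum_of_forall_nonpos (s : Finset ι) (a : ι → W →ₗ[ℝ] ℝ)
    (c : W →ₗ[ℝ] ℝ) (h : ∀ z, (∀ i ∈ s, a i z ≤ 0) → c z ≤ 0) :
    ∃ μ : ι → ℝ, (∀ i, 0 ≤ μ i) ∧ ∀ z, c z = ∑ i ∈ s, μ i * a i z := by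
  classical
  induction s using Finset.induction_on generalizing a c with
  | empty =>
    refine ⟨0, fun _ => le_rfl, fun z => ?_⟩
    have h₁ := h z (by simp)
    have h₂ := h (-z) (by simp)
    simp only [map_neg, neg_nonpos] at h₂
    simp only [Finset.sum_empty]
    linarith
  | @insert j s hj ih =>
    by_cases hs : ∀ z, (∀ i ∈ s, a i z ≤ 0) → c z ≤ 0
    · obtain ⟨μ, hμ, hc⟩ := ih a c hs
      refine ⟨update μ j 0, fun i => ?_, fun z => ?_⟩
      · rcases eq_or_ne i j with rfl | hij
        · simp
        · simpa [hij] using hμ i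
      · rw [Finset.sum_insert_update_mul hj, zero_mul, zero_add, hc]
    push Not at hs
    obtain ⟨z₀, hz₀, hcz₀⟩ := hs
    have hjz₀ : 0 < a j z₀ := by
      by_contra! hjz₀
      exact hcz₀.not_ge (h z₀ (Finset.forall_mem_insert _ _ _ |>.2 ⟨hjz₀, hz₀⟩))
    -- `P` projects onto `ker (a j)` along `z₀`; on `ker (a j)` only the constraints in `s` remain.
    set P : W →ₗ[ℝ] W := LinearMap.id - ((a j z₀)⁻¹ • a j).smulRight z₀
    have hP : ∀ z, P z = z - (a j z / a j z₀) • z₀ := fun z => by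
      simp [P, div_eq_inv_mul]
    have hjP : ∀ z, a j (P z) = 0 := fun z => by
      rw [hP, map_sub, map_smul, smul_eq_mul, div_mul_cancel₀ _ hjz₀.ne', sub_self]
    obtain ⟨μ, hμ, hc⟩ := ih (fun i => a i ∘ₗ P) (c ∘ₗ P) fun z hz =>
      h (P z) (Finset.forall_mem_insert _ _ _ |>.2 ⟨(hjP z).le, hz⟩)
    set t := (c z₀ - ∑ i ∈ s, μ i * a i z₀) / a j z₀
    have ht : 0 ≤ t := by
      have : ∑ i ∈ s, μ i * a i z₀ ≤ 0 :=
        Finset.sum_nonpos fun i hi => mul_nonpos_of_nonneg_of_nonpos (hμ i) (hz₀ i hi)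
      exact div_nonneg (by linarith) hjz₀.le
    refine ⟨update μ j t, fun i => ?_, fun z => ?_⟩
    · rcases eq_or_ne i j with rfl | hij
      · simpa using ht
      · simpa [hij] using hμ i
    · have hcz := hc z
      simp only [LinearMap.comp_apply, hP, map_sub, map_smul, smul_eq_mul, mul_sub,
        Finset.sum_sub_distrib, mul_left_comm _ (a j z / a j z₀), ← Finset.mul_sum] at hcz
      have htz : t * a j z = a j z / a j z₀ * (c z₀ - ∑ i ∈ s, μ i * a i z₀) := by
        simp only [t]; ring
      rw [Finset.sum_insert_update_mul hj, htz]
      linarith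

variable {a : ι → W →ₗ[ℝ] ℝ} {γ : ι → ℝ} {c : W →ₗ[ℝ] ℝ} {γ₀ : ℝ}

lemma le_mul_of_forall_le_mul (hfeas : ∃ z₀, ∀ i, a i z₀ ≤ γ i)
    (h : ∀ z, (∀ i, a i z ≤ γ i) → c z ≤ γ₀) {z : W} {t : ℝ} (ht : 0 ≤ t)
    (hz : ∀ i, a i z ≤ γ i * t) : c z ≤ γ₀ * t := by
  rcases ht.eq_or_lt with rfl | ht
  · -- `z` is a recession direction of the system, so `c z > 0` would make `c` unbounded on it.
    obtain ⟨z₀, hz₀⟩ := hfeas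
    by_contra! hcz
    rw [mul_zero] at hcz
    set r := (|γ₀ - c z₀| + 1) / c z
    have hr : r * c z = |γ₀ - c z₀| + 1 := div_mul_cancel₀ _ hcz.ne'
    have hle := h (z₀ + r • z) fun i => by
      have := mul_nonpos_of_nonneg_of_nonpos (by positivity : 0 ≤ r) (by simpa using hz i)
      simp only [map_add, map_smul, smul_eq_mul]
      linarith [hz₀ i]
    simp only [map_add, map_smul, smul_eq_mul] at hle
    linarith [le_abs_self (γ₀ - c z₀)]
  · have hle := h (t⁻¹ • z) fun i => by
      rw [map_smul, smul_eq_mul, inv_mul_le_iff₀ ht, mul_comm]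
      exact hz i
    rwa [map_smul, smul_eq_mul, inv_mul_le_iff₀ ht, mul_comm] at hle

theorem exists_nonneg_eq_sum_of_forall_le [Fintype ι] (hfeas : ∃ z₀, ∀ i, a i z₀ ≤ γ i)
    (h : ∀ z, (∀ i, a i z ≤ γ i) → c z ≤ γ₀) :
    ∃ μ : ι → ℝ, (∀ i, 0 ≤ μ i) ∧ (∀ z, c z = ∑ i, μ i * a i z) ∧ ∑ i, μ i * γ i ≤ γ₀ := by
  -- homogenization: the cone of `(z, t)` with `0 ≤ t` and `a i z ≤ γ i * t`
  let A : Option ι → W × ℝ →ₗ[ℝ] ℝ :=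
    fun o => o.elim (-LinearMap.snd ℝ W ℝ) fun i => (a i).coprod (-γ i • LinearMap.id)
  have hA : ∀ z t, A none (z, t) = -t ∧ ∀ i, A (some i) (z, t) = a i z - γ i * t := by
    simp [A, sub_eq_add_neg]
  obtain ⟨μ, hμ, hc⟩ := exists_nonneg_eq_sum_of_forall_nonpos Finset.univ A
    (c.coprod (-γ₀ • LinearMap.id)) fun ⟨z, t⟩ hzt => by
      have ht := (hA z t).1 ▸ hzt none (Finset.mem_univ _)
      have hz : ∀ i, a i z ≤ γ i * t := fun i => by
        have := (hA z t).2 i ▸ hzt (some i) (Finset.mem_univ _)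
        linarith
      simpa [← sub_eq_add_neg] using le_mul_of_forall_le_mul hfeas h (neg_nonpos.1 ht) hz
  refine ⟨fun i => μ (some i), fun i => hμ _, fun z => ?_, ?_⟩
  · simpa [Fintype.sum_option, (hA z 0).1, (hA z 0).2] using hc (z, 0)
  · have := hc (0, 1)
    simp only [Fintype.sum_option, (hA 0 1).1, (hA 0 1).2, LinearMap.coprod_apply, map_zero,
      LinearMap.smul_apply, LinearMap.id_apply, smul_eq_mul, mul_one, zero_add, mul_neg,
      zero_sub, Finset.sum_neg_distrib] at this
    linarith [hμ none]

end Farkas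

section Multipliers

variable {X κ ι : Type*} [AddCommGroup X] [Module ℝ X] [Fintype κ] [Fintype ι]

theorem exists_dual_multipliers (V : Submodule ℝ X) (ℓ : κ → X →ₗ[ℝ] ℝ) (c : κ → ℝ)
    (a : ι → X →ₗ[ℝ] ℝ) (γ : ι → ℝ) {x : X} {r : ℝ}
    (hxr : ∀ k, ℓ k x + c k ≤ r) (hx : ∀ i, a i x ≤ γ i)
    (hmin : ∀ d ∈ V, ∀ t, (∀ k, ℓ k (x + d) + c k ≤ t) → (∀ i, a i (x + d) ≤ γ i) → r ≤ t) :
    ∃ (lam : κ → ℝ) (μ : ι → ℝ), (∀ k, 0 ≤ lam k) ∧ ∑ k, lam k = 1 ∧ (∀ i, 0 ≤ μ i) ∧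
      (∀ d ∈ V, ∑ k, lam k * ℓ k d + ∑ i, μ i * a i d = 0) ∧
      r + ∑ i, μ i * (γ i - a i x) ≤ ∑ k, lam k * (ℓ k x + c k) := by
  -- Farkas' lemma for the linear program `min t` over `(d, t) ∈ V × ℝ` subject to
  -- `ℓ k (x + d) + c k ≤ t` and `a i (x + d) ≤ γ i`, whose optimal value is `r`
  let A : κ ⊕ ι → V × ℝ →ₗ[ℝ] ℝ := Sum.elim
    (fun k => (ℓ k ∘ₗ V.subtype).coprod (-LinearMap.id)) (fun i => (a i ∘ₗ V.subtype).coprod 0)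
  let b : κ ⊕ ι → ℝ := Sum.elim (fun k => -(ℓ k x + c k)) (fun i => γ i - a i x)
  obtain ⟨ν, hν, hA, hb⟩ := exists_nonneg_eq_sum_of_forall_le (a := A) (γ := b)
    (c := (0 : V →ₗ[ℝ] ℝ).coprod (-LinearMap.id)) (γ₀ := -r) ⟨(0, r), by
      rintro (k | i)
      · simpa [A, b] using hxr k
      · simpa [A, b] using hx i⟩
    fun ⟨d, t⟩ hdt => by
      have hk (k : κ) : ℓ k (x + d) + c k ≤ t := by
        have := hdt (.inl k)
        simp only [A, b, Sum.elim_inl, LinearMap.coprod_apply, LinearMap.comp_apply,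
          Submodule.subtype_apply, LinearMap.neg_apply, LinearMap.id_apply] at this
        rw [map_add]
        linarith
      have hi (i : ι) : a i (x + d) ≤ γ i := by
        have := hdt (.inr i)
        simp only [A, b, Sum.elim_inr, LinearMap.coprod_apply, LinearMap.comp_apply,
          Submodule.subtype_apply, LinearMap.zero_apply, add_zero] at this
        rw [map_add]
        linarith
      simpa using hmin d d.2 t hk hi
  refine ⟨fun k => ν (.inl k), fun i => ν (.inr i), fun k => hν _, ?_, fun i => hν _,
    fun d hd => ?_, ?_⟩
  · simpa [A, Fintype.sum_sum_type, eq_comm] using hA (0, 1)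
  · simpa [A, Fintype.sum_sum_type] using (hA (⟨d, hd⟩, 0)).symm
  · simp only [b, Fintype.sum_sum_type, Sum.elim_inl, Sum.elim_inr, mul_neg,
      Finset.sum_neg_distrib] at hb
    linarith

theorem exists_kkt_multipliers [Nonempty κ] (V : Submodule ℝ X) (ℓ : κ → X →ₗ[ℝ] ℝ)
    (c : κ → ℝ) (a : ι → X →ₗ[ℝ] ℝ) (γ : ι → ℝ) {g : X → ℝ}
    (hg : ∀ u, g u = Finset.univ.sup' Finset.univ_nonempty fun k => ℓ k u + c k) {x : X}
    (hx : ∀ i, a i x ≤ γ i) (hmin : ∀ d ∈ V, (∀ i, a i (x + d) ≤ γ i) → g x ≤ g (x + d)) :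
    ∃ (lam : κ → ℝ) (μ : ι → ℝ), (∀ k, 0 ≤ lam k) ∧ ∑ k, lam k = 1 ∧
      ∑ k, lam k * (ℓ k x + c k) = g x ∧ (∀ i, 0 ≤ μ i) ∧ (∀ i, μ i * a i x = μ i * γ i) ∧
      ∀ d ∈ V, ∑ k, lam k * ℓ k d + ∑ i, μ i * a i d = 0 := by
  have hgx (k : κ) : ℓ k x + c k ≤ g x :=
    hg x ▸ Finset.le_sup' (fun k => ℓ k x + c k) (Finset.mem_univ k)
  obtain ⟨lam, μ, hlam, hsum, hμ, hV, hdual⟩ := exists_dual_multipliers V ℓ c a γ hgx hx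
    fun d hd t ht hdt => (hmin d hd hdt).trans (hg _ ▸ Finset.sup'_le _ _ fun k _ => ht k)
  have hval : ∑ k, lam k * (ℓ k x + c k) ≤ g x :=
    Finset.sum_mul_le_of_sum_eq_one (fun k _ => hlam k) hsum fun k _ => hgx k
  have hslack : 0 ≤ ∑ i, μ i * (γ i - a i x) :=
    Finset.sum_nonneg fun i _ => mul_nonneg (hμ i) (sub_nonneg.2 (hx i))
  have hslack0 := (Finset.sum_eq_zero_iff_of_nonneg fun i _ =>
    mul_nonneg (hμ i) (sub_nonneg.2 (hx i))).1 (by linarith)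
  refine ⟨lam, μ, hlam, hsum, by linarith, hμ, fun i => ?_, hV⟩
  linarith [hslack0 i (Finset.mem_univ _), mul_sub (μ i) (γ i) (a i x)]

end Multipliers

section Polyhedral

variable {X : Type*} [AddCommGroup X] [Module ℝ X] [TopologicalSpace X]

def normalCone (D : Set X) (x : X) : Set (X →L[ℝ] ℝ) :=
  {ψ | ∀ u ∈ D, ψ u - ψ x ≤ 0}

def subdifferential (f : X → EReal) (x : X) : Set (X →L[ℝ] ℝ) :=
  {φ | ∀ u, ((φ u - φ x : ℝ) : EReal) ≤ f u - f x}

lemma le_of_zero_mem_subdifferential_add_normalCone {f : X → EReal} {D : Set X} {x : X} {r : ℝ}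
    (hx : f x = r) (h : 0 ∈ subdifferential f x + normalCone D x) : ∀ u ∈ D, f x ≤ f u := by
  obtain ⟨φ, hφ, ψ, hψ, hφψ⟩ := h
  intro u hu
  have hφu : (0 : ℝ) ≤ φ u - φ x := by
    have := hψ u hu
    rw [eq_neg_of_add_eq_zero_right hφψ, neg_apply, neg_apply] at this
    linarith
  have := (EReal.coe_le_coe_iff.2 hφu).trans (hφ u)
  rwa [EReal.coe_zero, EReal.sub_nonneg (by simp [hx]) (by simp [hx])] at this

lemma mem_subdifferential_of_forall_mem {f : X → EReal} {g : X → ℝ} {S : Set X} {x : X}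
    (hfg : ∀ u ∈ S, f u = g u) (hf : ∀ u ∉ S, f u = ⊤) (hx : x ∈ S) {φ : X →L[ℝ] ℝ}
    (hφ : ∀ u ∈ S, φ u - φ x ≤ g u - g x) : φ ∈ subdifferential f x := by
  intro u
  by_cases hu : u ∈ S
  · rw [hfg u hu, hfg x hx, ← EReal.coe_sub, EReal.coe_le_coe_iff]
    exact hφ u hu
  · rw [hf u hu, hfg x hx, EReal.top_sub_coe]
    exact le_top

lemma exists_forall_sub_le_and_neg_mem_normalCone {S D : Set X} {V : Submodule ℝ X} {x : X}
    {F : X → ℝ} {φ ψ : X →L[ℝ] ℝ} (hφ : ∀ u ∈ S, φ u - φ x ≤ F u) (hψ : ψ ∈ normalCone D x)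
    (hV : ∀ d ∈ V, φ d + ψ d = 0) (hSD : (∀ u ∈ S, u - x ∈ V) ∨ ∀ u ∈ D, u - x ∈ V) :
    ∃ χ : X →L[ℝ] ℝ, (∀ u ∈ S, χ u - χ x ≤ F u) ∧ -χ ∈ normalCone D x := by
  rcases hSD with hS | hD
  · refine ⟨-ψ, fun u hu => ?_, by rwa [neg_neg]⟩
    have := hV _ (hS u hu)
    simp only [map_sub, neg_apply] at this ⊢
    linarith [hφ u hu]
  · refine ⟨φ, hφ, fun u hu => ?_⟩
    have := hV _ (hD u hu)
    simp only [map_sub, neg_apply] at this ⊢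
    linarith [hψ u hu]

lemma IsGPCS.exists_eq_setOf_sub_mem {S : Set X} (hS : IsGPCS S) {x : X} (hx : x ∈ S) :
    ∃ (p : ℕ) (a : Fin p → X →L[ℝ] ℝ) (α : Fin p → ℝ) (V : Submodule ℝ X),
      S = {u | u - x ∈ V ∧ ∀ i, a i u ≤ α i} := by
  obtain ⟨p, a, α, L, -, rfl⟩ := hS
  refine ⟨p, a, α, L.direction, Set.ext fun u => ?_⟩
  simp [← vsub_eq_sub, AffineSubspace.vsub_right_mem_direction_iff_mem hx.1]

lemma IsPCS.exists_eq_setOf_sub_mem {S : Set X} (hS : IsPCS S) (x : X) :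
    ∃ (p : ℕ) (a : Fin p → X →L[ℝ] ℝ) (α : Fin p → ℝ),
      S = {u | u - x ∈ (⊤ : Submodule ℝ X) ∧ ∀ i, a i u ≤ α i} := by
  obtain ⟨p, a, α, rfl⟩ := hS
  exact ⟨p, a, α, by simp⟩

lemma sum_smul_mem_normalCone {ι : Type*} [Fintype ι] {D : Set X} {x : X}
    {a : ι → X →L[ℝ] ℝ} {α μ : ι → ℝ} (hD : ∀ u ∈ D, ∀ i, a i u ≤ α i) (hμ : ∀ i, 0 ≤ μ i)
    (hslack : ∀ i, μ i * a i x = μ i * α i) : ∑ i, μ i • a i ∈ normalCone D x := fun u hu => by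
  have := Finset.sum_mul_le_sum_mul_of_complementary_slackness (s := Finset.univ)
    (fun i _ => hμ i) (fun i _ => hslack i) fun i _ => hD u hu i
  simp only [sum_apply, smul_apply, smul_eq_mul]
  linarith

lemma sum_smul_sub_le_of_sum_mul_eq {κ : Type*} [Fintype κ] [Nonempty κ] {v : κ → X →L[ℝ] ℝ}
    {c lam : κ → ℝ} {g : X → ℝ}
    (hg : ∀ u, g u = Finset.univ.sup' Finset.univ_nonempty fun k => v k u + c k) {x : X}
    (hlam : ∀ k, 0 ≤ lam k) (hsum : ∑ k, lam k = 1) (hval : ∑ k, lam k * (v k x + c k) = g x)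
    (u : X) : (∑ k, lam k • v k) u - (∑ k, lam k • v k) x ≤ g u - g x := by
  have hgu : ∑ k, lam k * (v k u + c k) ≤ g u :=
    Finset.sum_mul_le_of_sum_eq_one (fun k _ => hlam k) hsum fun k _ =>
      hg u ▸ Finset.le_sup' (fun k => v k u + c k) (Finset.mem_univ k)
  simp only [mul_add, Finset.sum_add_distrib] at hgu hval
  simp only [sum_apply, smul_apply, smul_eq_mul]
  linarith

theorem zero_mem_subdifferential_add_normalCone_of_forall_le {κ ι₁ ι₂ : Type*} [Fintype κ]
    [Nonempty κ] [Fintype ι₁] [Fintype ι₂] {D S : Set X} {x : X} {V₁ V₂ : Submodule ℝ X}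
    {a : ι₁ → X →L[ℝ] ℝ} {α : ι₁ → ℝ} {b : ι₂ → X →L[ℝ] ℝ} {β : ι₂ → ℝ}
    (hD : D = {u | u - x ∈ V₁ ∧ ∀ i, a i u ≤ α i})
    (hS : S = {u | u - x ∈ V₂ ∧ ∀ j, b j u ≤ β j}) (hV : V₁ = ⊤ ∨ V₂ = ⊤)
    (v : κ → X →L[ℝ] ℝ) (c : κ → ℝ) {f : X → EReal}
    (hf : ∀ u ∈ S, f u = ((Finset.univ.sup' Finset.univ_nonempty fun k => v k u + c k : ℝ)))
    (hf' : ∀ u ∉ S, f u = ⊤) (hxD : x ∈ D) (hxS : x ∈ S) (hmin : ∀ u ∈ D, f x ≤ f u) :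
    0 ∈ subdifferential f x + normalCone D x := by
  set g : X → ℝ := fun u => Finset.univ.sup' Finset.univ_nonempty fun k => v k u + c k
  have hmemD (u : X) : u ∈ D ↔ u - x ∈ V₁ ∧ ∀ i, a i u ≤ α i := Set.ext_iff.1 hD u
  have hmemS (u : X) : u ∈ S ↔ u - x ∈ V₂ ∧ ∀ j, b j u ≤ β j := Set.ext_iff.1 hS u
  obtain ⟨lam, μ, hlam, hsum, hval, hμ, hslack, hker⟩ := exists_kkt_multipliers (V₁ ⊓ V₂)
    (fun k => v k) c (Sum.elim (fun i => a i) fun j => b j) (Sum.elim α β) (g := g) (x := x)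
    (fun _ => rfl) (by rintro (i | j) <;> simp [((hmemD x).1 hxD).2, ((hmemS x).1 hxS).2])
    fun d hd hdt => by
      have huD := (hmemD (x + d)).2 ⟨by simpa using hd.1, fun i => by simpa using hdt (.inl i)⟩
      have huS := (hmemS (x + d)).2 ⟨by simpa using hd.2, fun j => by simpa using hdt (.inr j)⟩
      have := hmin _ huD
      rwa [hf x hxS, hf _ huS, EReal.coe_le_coe_iff] at this
  simp only [Fintype.sum_sum_type, Sum.elim_inl, Sum.elim_inr, ContinuousLinearMap.coe_coe]
    at hker hval
  let φ : X →L[ℝ] ℝ := ∑ k, lam k • v k + ∑ j, μ (.inr j) • b j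
  let ψ : X →L[ℝ] ℝ := ∑ i, μ (.inl i) • a i
  have hφ : ∀ u ∈ S, φ u - φ x ≤ g u - g x := fun u hu => by
    have hv := sum_smul_sub_le_of_sum_mul_eq (fun _ => rfl) hlam hsum hval u
    have hb := sum_smul_mem_normalCone (fun u hu => ((hmemS u).1 hu).2) (fun j => hμ (.inr j))
      (fun j => hslack (.inr j)) u hu
    simp only [φ, add_apply]
    linarith
  have hψ : ψ ∈ normalCone D x := sum_smul_mem_normalCone (fun u hu => ((hmemD u).1 hu).2)
    (fun i => hμ (.inl i)) fun i => hslack (.inl i)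
  have hφψ : ∀ d ∈ V₁ ⊓ V₂, φ d + ψ d = 0 := fun d hd => by
    simp only [φ, ψ, add_apply, sum_apply, smul_apply, smul_eq_mul]
    linarith [hker d hd]
  obtain ⟨χ, hχ, hnχ⟩ := exists_forall_sub_le_and_neg_mem_normalCone hφ hψ hφψ <| by
    rcases hV with rfl | rfl
    · exact .inl fun u hu => by simpa using ((hmemS u).1 hu).1
    · exact .inr fun u hu => by simpa using ((hmemD u).1 hu).1
  exact ⟨χ, mem_subdifferential_of_forall_mem hf hf' hxS hχ, -χ, hnχ, add_neg_cancel χ⟩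

end Polyhedral

theorem optimality_condition_II_general
    {X : Type*}
    [AddCommGroup X] [Module ℝ X] [TopologicalSpace X]
    (D : Set X) (hD : IsGPCS D)
    (domf : Set X) (hdomf : IsGPCS domf)
    (m : ℕ) (v : Fin (m + 1) → X →L[ℝ] ℝ) (β : Fin (m + 1) → ℝ)
    (f : X → EReal)
    (hf : ∀ x ∈ domf,
      f x = ((Finset.univ.sup' Finset.univ_nonempty fun k => v k x + β k : ℝ) : EReal))
    (hf' : ∀ x ∉ domf, f x = ⊤)
    (hpoly : IsPCS domf ∨ IsPCS D)
    (x : X) (hxD : x ∈ D) (hxdom : x ∈ domf) :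
    (∀ u ∈ D, f x ≤ f u) ↔
      (0 : X →L[ℝ] ℝ) ∈
        ({φ : X →L[ℝ] ℝ | ∀ u : X, ((φ u - φ x : ℝ) : EReal) ≤ f u - f x} +
          {φ : X →L[ℝ] ℝ | ∀ u ∈ D, φ u - φ x ≤ 0}) := by
  refine ⟨fun hmin => ?_, le_of_zero_mem_subdifferential_add_normalCone (hf x hxdom)⟩
  obtain ⟨p, a, α, V₁, hD₁, q, b, b₀, V₂, hdom₂, hV⟩ : ∃ (p : ℕ) (a : Fin p → X →L[ℝ] ℝ)
      (α : Fin p → ℝ) (V₁ : Submodule ℝ X), D = {u | u - x ∈ V₁ ∧ ∀ i, a i u ≤ α i} ∧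
      ∃ (q : ℕ) (b : Fin q → X →L[ℝ] ℝ) (b₀ : Fin q → ℝ) (V₂ : Submodule ℝ X),
      domf = {u | u - x ∈ V₂ ∧ ∀ j, b j u ≤ b₀ j} ∧ (V₁ = ⊤ ∨ V₂ = ⊤) := by
    rcases hpoly with hP | hP
    · obtain ⟨p, a, α, V₁, hD₁⟩ := hD.exists_eq_setOf_sub_mem hxD
      obtain ⟨q, b, b₀, hdom₂⟩ := hP.exists_eq_setOf_sub_mem x
      exact ⟨p, a, α, V₁, hD₁, q, b, b₀, ⊤, hdom₂, .inr rfl⟩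
    · obtain ⟨p, a, α, hD₁⟩ := hP.exists_eq_setOf_sub_mem x
      obtain ⟨q, b, b₀, V₂, hdom₂⟩ := hdomf.exists_eq_setOf_sub_mem hxdom
      exact ⟨p, a, α, ⊤, hD₁, q, b, b₀, V₂, hdom₂, .inl rfl⟩
  exact zero_mem_subdifferential_add_normalCone_of_forall_le hD₁ hdom₂ hV v β hf hf' hxD hxdom hmin

/-- **Optimality condition II.**  Assume either `f` is a proper polyhedral convex function
(equivalently here: `dom f` is a polyhedral convex set) or `D` is a nonempty polyhedral
convex set.  Then `x ∈ D ∩ dom f` solves `(P) : min {f x | x ∈ D}` iff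
`0 ∈ ∂f(x) + N_D(x)`. -/
theorem optimality_condition_II
    {X : Type*}
    [AddCommGroup X] [Module ℝ X] [TopologicalSpace X] [IsTopologicalAddGroup X]
    [ContinuousSMul ℝ X] [LocallyConvexSpace ℝ X] [T2Space X]
    (D : Set X) (hD : IsGPCS D) (hDne : D.Nonempty)
    (domf : Set X) (hdomf : IsGPCS domf) (hdomne : domf.Nonempty)
    (m : ℕ) (v : Fin (m + 1) → X →L[ℝ] ℝ) (β : Fin (m + 1) → ℝ)
    (f : X → EReal)
    (hf : ∀ x ∈ domf,
      f x = ((Finset.univ.sup' Finset.univ_nonempty fun k => v k x + β k : ℝ) : EReal))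
    (hf' : ∀ x ∉ domf, f x = ⊤)
    (hpoly : IsPCS domf ∨ IsPCS D)
    (x : X) (hxD : x ∈ D) (hxdom : x ∈ domf) :
    (∀ u ∈ D, f x ≤ f u) ↔
      (0 : X →L[ℝ] ℝ) ∈
        ({φ : X →L[ℝ] ℝ | ∀ u : X, ((φ u - φ x : ℝ) : EReal) ≤ f u - f x} +
          {φ : X →L[ℝ] ℝ | ∀ u ∈ D, φ u - φ x ≤ 0}) :=
  optimality_condition_II_general D hD domf hdomf m v β f hf hf' hpoly x hxD hxdom
end
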